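/- arXiv:1807.11813 — 6 statements merged into one kernel-verified Lean document; each statement's English description precedes it below -/
import Mathlib

section
/- For every f ∈ B, if the principal ideal (f) is σ-invariant, i.e. the image of the ideal generated by f under σ equals the ideal generated by f, then f = 0 or f is a unit of B. (In other words, B has no nonzero proper principal σ-invariant ideals.) -/
/-!
If `(σ f) = (f)` with `f ≠ 0`, then `σ f = f * u` for a unit `u`, and units of `k[ℤ²]` are
monomials `c • x^g` (compare the extreme exponents of `u` and `u⁻¹` along an injective linear
form). So `σ` maps the support `S` of `f` onto the translate `S + g`. The linear form
`φ(m, n) = (2 + 2√2) m + n` satisfies `φ ∘ σ = (3 + 2√2) φ`, so the width `max φ(S) - min φ(S)`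
is multiplied by `3 + 2√2 > 1` under `σ` but unchanged by translation: it vanishes, `S` is a
single point, and `f` is a monomial, hence a unit.
-/

/-- The group automorphism of `ℤ × ℤ` sending `(m, n)` to `(5m + n, 4m + n)`. -/
noncomputable def Mzz : (ℤ × ℤ) ≃+ (ℤ × ℤ) where
  toFun v := (5 * v.1 + v.2, 4 * v.1 + v.2)
  invFun v := (v.1 - v.2, -4 * v.1 + 5 * v.2)
  left_inv := by rintro ⟨m, n⟩; simp only [Prod.mk.injEq]; constructor <;> ring
  right_inv := by rintro ⟨m, n⟩; simp only [Prod.mk.injEq]; constructor <;> ring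
  map_add' := by
    rintro ⟨m, n⟩ ⟨m', n'⟩
    simp only [Prod.mk_add_mk, Prod.mk.injEq]
    constructor <;> ring

/-- The `k`-algebra automorphism `σ` of `B = k[x^{±1}, y^{±1}]` with
`σ(x) = x^5 y^4`, `σ(y) = x y`, induced by `Mzz`. -/
noncomputable def σB (k : Type*) [Field k] :
    AddMonoidAlgebra k (ℤ × ℤ) ≃ₐ[k] AddMonoidAlgebra k (ℤ × ℤ) :=
  AddMonoidAlgebra.domCongr k k Mzz

namespace AddMonoidAlgebra

variable {k G T : Type*} [Semiring k] [NoZeroDivisors k] [AddMonoid G]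
  [AddCommGroup T] [LinearOrder T] [IsOrderedAddMonoid T] {φ : G →+ T}

theorem exists_isMax_add_mem_support_mul (hφ : Function.Injective φ) {p q : k[G]}
    (hp : p ≠ 0) (hq : q ≠ 0) :
    ∃ a ∈ p.coeff.support, ∃ b ∈ q.coeff.support, a + b ∈ (p * q).coeff.support ∧
      (∀ x ∈ p.coeff.support, φ x ≤ φ a) ∧ ∀ y ∈ q.coeff.support, φ y ≤ φ b := by
  obtain ⟨a, ha, ha_max⟩ := p.coeff.support.exists_max_image φ (by simpa using hp)
  obtain ⟨b, hb, hb_max⟩ := q.coeff.support.exists_max_image φ (by simpa using hq)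
  have hunique : UniqueAdd p.coeff.support q.coeff.support a b := by
    intro x y hx hy hxy
    have hφxy : φ x + φ y = φ a + φ b := by rw [← map_add, ← map_add, hxy]
    have hxa : φ x = φ a := by
      refine le_antisymm (ha_max x hx) (le_of_add_le_add_right (a := φ b) ?_)
      calc φ a + φ b = φ x + φ y := hφxy.symm
        _ ≤ φ x + φ b := by gcongr; exact hb_max y hy
    exact ⟨hφ hxa, hφ (add_left_cancel (hφxy.trans (by rw [hxa])))⟩
  refine ⟨a, ha, b, hb, ?_, ha_max, hb_max⟩
  rw [Finsupp.mem_support_iff, coeff_mul_add_of_uniqueAdd hunique]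
  exact mul_ne_zero (Finsupp.mem_support_iff.mp ha) (Finsupp.mem_support_iff.mp hb)

theorem exists_eq_single_of_isUnit [Nontrivial k] (hφ : Function.Injective φ) {u : k[G]}
    (hu : IsUnit u) : ∃ a c, u = single a c := by
  obtain ⟨v, huv⟩ := hu.exists_right_inv
  have hv : v ≠ 0 := by rintro rfl; simp at huv
  have hsum_zero {a b : G} (h : a + b ∈ (u * v).coeff.support) : φ a = -φ b := by
    have hab : a + b = 0 := by simpa using support_coeff_one_subset (huv ▸ h)
    rw [eq_neg_iff_add_eq_zero, ← map_add, hab, map_zero]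
  obtain ⟨a, -, b, hb, hab, ha_max, -⟩ := exists_isMax_add_mem_support_mul hφ hu.ne_zero hv
  obtain ⟨a', -, b', -, hab', ha'_min, hb'_min⟩ :=
    exists_isMax_add_mem_support_mul (φ := -φ) (neg_injective.comp hφ) hu.ne_zero hv
  refine ⟨a, u.coeff a, coeff_injective (Finsupp.support_subset_singleton.mp fun x hx => ?_)⟩
  refine Finset.mem_singleton.mpr (hφ (le_antisymm (ha_max x hx) ?_))
  have hb'b : φ b' ≤ φ b := by simpa using hb'_min b hb
  have ha'x : φ a' ≤ φ x := by simpa using ha'_min x hx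
  have ha' : φ a' = -φ b' := by simpa [neg_eq_iff_eq_neg] using hsum_zero hab'
  calc φ a = -φ b := hsum_zero hab
    _ ≤ -φ b' := neg_le_neg hb'b
    _ = φ a' := ha'.symm
    _ ≤ φ x := ha'x

theorem isUnit_single {G K : Type*} [AddGroup G] [DivisionRing K] {a : G} {c : K} (hc : c ≠ 0) :
    IsUnit (single a c) :=
  ⟨⟨single a c, single (-a) c⁻¹, by simp [single_mul_single, hc, one_def],
    by simp [single_mul_single, hc, one_def]⟩, rfl⟩

end AddMonoidAlgebra

theorem Finset.apply_eq_apply_of_image_subset_image_add {G : Type*} [AddZeroClass G]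
    [DecidableEq G] (φ : G →+ ℝ) (M : G → G) {l : ℝ} (hl : 1 < l) (hφM : ∀ x, φ (M x) = l * φ x)
    {S : Finset G} {g : G} (hS : S.image M ⊆ S.image (· + g)) {s t : G} (hs : s ∈ S)
    (ht : t ∈ S) : φ s = φ t := by
  obtain ⟨a, ha, ha_max⟩ := S.exists_max_image φ ⟨s, hs⟩
  obtain ⟨b, hb, hb_min⟩ := S.exists_min_image φ ⟨s, hs⟩
  obtain ⟨a', ha', ha'_eq⟩ := Finset.mem_image.mp (hS (Finset.mem_image_of_mem M ha))
  obtain ⟨b', hb', hb'_eq⟩ := Finset.mem_image.mp (hS (Finset.mem_image_of_mem M hb))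
  have hmax : l * φ a = φ a' + φ g := by rw [← hφM, ← ha'_eq, map_add]
  have hmin : l * φ b = φ b' + φ g := by rw [← hφM, ← hb'_eq, map_add]
  have hwidth : l * (φ a - φ b) ≤ φ a - φ b := by linarith [ha_max a' ha', hb_min b' hb']
  have hab : φ a ≤ φ b := by nlinarith [hb_min a ha]
  linarith [ha_max s hs, hb_min s hs, ha_max t ht, hb_min t ht]

/-- `(2 + 2√2, 1)` is a left eigenvector of the matrix `!![5, 1; 4, 1]` of `Mzz`, for the
eigenvalue `3 + 2√2`; irrationality of `√2` makes the form injective on `ℤ²`. -/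
noncomputable def leftEigenform : ℤ × ℤ →+ ℝ :=
  AddMonoidHom.mk' (fun v => (2 + 2 * √2) * v.1 + v.2) fun v w => by
    simp only [Prod.fst_add, Prod.snd_add]
    push_cast
    ring

theorem leftEigenform_Mzz (v : ℤ × ℤ) :
    leftEigenform (Mzz v) = (3 + 2 * √2) * leftEigenform v := by
  have h2 : √2 * √2 = 2 := Real.mul_self_sqrt (by norm_num)
  simp only [leftEigenform, Mzz, AddMonoidHom.mk'_apply, AddEquiv.coe_mk, Equiv.coe_fn_mk]
  push_cast
  linear_combination (-4 * (v.1 : ℝ)) * h2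

theorem leftEigenform_injective : Function.Injective leftEigenform := by
  refine (injective_iff_map_eq_zero leftEigenform).mpr fun ⟨m, n⟩ h => ?_
  simp only [leftEigenform, AddMonoidHom.mk'_apply] at h
  have hm : m = 0 := by
    by_contra hm
    refine irrational_sqrt_two ⟨-(n + 2 * m) / (2 * m), ?_⟩
    push_cast
    field_simp
    linear_combination -h
  subst hm
  simpa [Prod.ext_iff] using h

open AddMonoidAlgebra in
/-- `B` has no nonzero proper principal `σ`-invariant ideals: if the principal ideal `(f)`
is `σ`-invariant then `f = 0` or `f` is a unit. -/
theorem stmt0 (k : Type*) [Field k] (f : AddMonoidAlgebra k (ℤ × ℤ))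
    (h : Ideal.map (σB k) (Ideal.span {f}) = Ideal.span {f}) :
    f = 0 ∨ IsUnit f := by
  refine or_iff_not_imp_left.mpr fun hf => ?_
  obtain ⟨w, hw⟩ : Associated f (σB k f) := by
    rw [← Ideal.span_singleton_eq_span_singleton, ← Set.image_singleton, ← Ideal.map_span, h]
  obtain ⟨g, c, hgc⟩ := exists_eq_single_of_isUnit leftEigenform_injective w.isUnit
  have hc : c ≠ 0 := by rintro rfl; exact w.ne_zero (by simp [hgc])
  have hsupport : f.coeff.support.image Mzz = f.coeff.support.image (· + g) :=
    calc f.coeff.support.image Mzz = (σB k f).coeff.support := by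
          simp [σB, domCongr_support, Finset.map_eq_image]
      _ = (f * single g c).coeff.support := by rw [← hw, hgc]
      _ = f.coeff.support.image (· + g) :=
          support_coeff_mul_single_eq_image f (by simp [hc]) (.all g)
  have hexpanding : (1 : ℝ) < 3 + 2 * √2 := by linarith [Real.sqrt_nonneg 2]
  obtain ⟨a, ha⟩ : f.coeff.support.Nonempty := by simpa using hf
  have hf_single : f = single a (f.coeff a) := coeff_injective <|
    Finsupp.support_subset_singleton.mp fun x hx => Finset.mem_singleton.mpr <|
      leftEigenform_injective <| Finset.apply_eq_apply_of_image_subset_image_add leftEigenform Mzz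
        hexpanding leftEigenform_Mzz hsupport.le hx ha
  rw [hf_single]
  exact isUnit_single (by simpa using ha)
end

section
/- Let M : ℤ × ℤ → ℤ × ℤ be the ℤ-linear map M(m,n) = (5m+n, 4m+n), let w ∈ ℤ × ℤ, and let Φ : ℤ × ℤ → ℤ × ℤ be the affine map Φ(v) = M(v) - w. If the forward orbit {Φ^j(0,0) : j ∈ ℕ} of the origin under Φ is a finite set, then w = (0,0). -/
/-!
Consecutive differences along the orbit of `Φ` evolve linearly, `Φ^[j+1] 0 - Φ^[j] 0 = M^[j] (-w)`,
so a finite orbit forces `{M^[j] w : j ∈ ℕ}` to be finite. The functional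
`v ↦ (2 + 2√2) v.1 + v.2` is a left eigenvector of `M` for the eigenvalue `3 + 2√2 > 1`, so it
multiplies by `(3 + 2√2)^j` along that sequence; hence it vanishes at `w`, and since `√2` is
irrational this forces `w = 0`.
-/

open Function Pointwise

theorem Set.Finite.range_succ_sub {G : Type*} [Sub G] {u : ℕ → G} (h : (Set.range u).Finite) :
    (Set.range fun j => u (j + 1) - u j).Finite :=
  (h.sub h).subset <| Set.range_subset_iff.2 fun j => Set.sub_mem_sub ⟨j + 1, rfl⟩ ⟨j, rfl⟩

theorem iterate_succ_sub_iterate {G : Type*} [AddGroup G] {Φ L : G → G}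
    (hΦ : ∀ u v, Φ u - Φ v = L (u - v)) (x : G) (j : ℕ) :
    Φ^[j + 1] x - Φ^[j] x = L^[j] (Φ x - x) := by
  induction j with
  | zero => rfl
  | succ j ih =>
    rw [iterate_succ_apply' Φ (j + 1), iterate_succ_apply' Φ j, hΦ, ← iterate_succ_apply' Φ j, ih,
      ← iterate_succ_apply' L]

theorem infinite_range_iterate_of_semiconj_mul {α K : Type*} [Field K] [LinearOrder K]
    [IsStrictOrderedRing K] {L : α → α} {f : α → K} {r : K} (hf : Semiconj f L (r * ·))
    (hr₀ : 0 < r) (hr₁ : r ≠ 1) {w : α} (hw : f w ≠ 0) :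
    (Set.range fun j => L^[j] w).Infinite := by
  refine Set.infinite_range_of_injective fun j k hjk => pow_right_injective₀ hr₀ hr₁ ?_
  have hf_iterate (n : ℕ) : f (L^[n] w) = r ^ n * f w := by
    rw [(hf.iterate_right n).eq, mul_left_iterate]
  simpa [hf_iterate, hw] using congrArg f hjk

namespace HyperbolicAutomorphism

def M (v : ℤ × ℤ) : ℤ × ℤ := (5 * v.1 + v.2, 4 * v.1 + v.2)

noncomputable def eigenCoord (v : ℤ × ℤ) : ℝ := (2 + 2 * √2) * v.1 + v.2

theorem eigenCoord_M (v : ℤ × ℤ) : eigenCoord (M v) = (3 + 2 * √2) * eigenCoord v := by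
  have hsq : √2 * √2 = 2 := Real.mul_self_sqrt zero_le_two
  simp only [eigenCoord, M]
  push_cast
  linear_combination (-4 * (v.1 : ℝ)) * hsq

theorem eigenCoord_ne_zero {v : ℤ × ℤ} (hv : v ≠ 0) : eigenCoord v ≠ 0 := by
  have hform : eigenCoord v = ((2 * v.1 : ℤ) : ℝ) * √2 + ((2 * v.1 + v.2 : ℤ) : ℝ) := by
    simp only [eigenCoord]; push_cast; ring
  by_cases h1 : v.1 = 0
  · have h2 : v.2 ≠ 0 := fun h2 => hv (Prod.ext h1 h2)
    simpa [eigenCoord, h1] using h2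
  · rw [hform]
    exact ((irrational_sqrt_two.intCast_mul (by omega)).add_intCast _).ne_zero

end HyperbolicAutomorphism

open HyperbolicAutomorphism in
/-- Let `M(m,n) = (5m+n, 4m+n)` and let `Φ(v) = M(v) - w` for a fixed `w ∈ ℤ × ℤ`.
If the forward orbit of the origin under `Φ` is finite, then `w = (0, 0)`. -/
theorem stmt2 (w : ℤ × ℤ)
    (h : (Set.range fun j : ℕ =>
      (fun v : ℤ × ℤ => (5 * v.1 + v.2, 4 * v.1 + v.2) - w)^[j] ((0 : ℤ), (0 : ℤ))).Finite) :
    w = ((0 : ℤ), (0 : ℤ)) := by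
  set Φ : ℤ × ℤ → ℤ × ℤ := fun v => (5 * v.1 + v.2, 4 * v.1 + v.2) - w
  have hΦ (u v : ℤ × ℤ) : Φ u - Φ v = M (u - v) := by
    ext <;> simp only [Φ, M, Prod.fst_sub, Prod.snd_sub] <;> ring
  have hdiff : (Set.range fun j => M^[j] (-w)).Finite := by
    have hΦ0 : Φ (0, 0) - (0, 0) = -w := by simp [Φ]
    simpa only [iterate_succ_sub_iterate hΦ, hΦ0] using h.range_succ_sub
  by_contra hw
  have hsemiconj : Semiconj eigenCoord M ((3 + 2 * √2) * ·) := eigenCoord_M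
  exact infinite_range_iterate_of_semiconj_mul hsemiconj (by positivity)
    (by nlinarith [Real.sqrt_pos.2 (two_pos (α := ℝ))])
    (eigenCoord_ne_zero (neg_ne_zero.2 hw)) hdiff
end

section
/- Assume k has characteristic zero. Let σ̂ denote the automorphism of the fraction field Frac(B) induced by σ. If c ∈ Frac(B) is nonzero and σ̂(c) = 2^m · c for some natural number m, then m = 0 and c lies in the image of k in Frac(B). -/
instance (k : Type*) [Field k] : IsDomain (AddMonoidAlgebra k (ℤ × ℤ)) :=
  NoZeroDivisors.to_isDomain _

namespace AddMonoidAlgebra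

section LeadingExp

variable {R A B : Type*} [Semiring R] [AddCommMonoid A] [AddCommMonoid B] [LinearOrder B]
  {D : A →+ B} {p q : R[A]} {a b : A}

def IsLeadingExp (D : A →+ B) (p : R[A]) (a : A) : Prop :=
  a ∈ p.coeff.support ∧ ∀ s ∈ p.coeff.support, D s ≤ D a

variable (D) in
theorem exists_isLeadingExp (hp : p ≠ 0) : ∃ a, IsLeadingExp D p a :=
  p.coeff.support.exists_max_image D (Finsupp.support_nonempty_iff.2 (coeff_eq_zero.not.2 hp))

theorem isLeadingExp_single {r : R} (hr : r ≠ 0) : IsLeadingExp D (single a r) a := by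
  rw [IsLeadingExp, coeff_single, Finsupp.support_single a hr]
  exact ⟨Finset.mem_singleton_self a, fun s hs => by rw [Finset.mem_singleton.1 hs]⟩

theorem IsLeadingExp.unique (hD : Function.Injective D) (ha : IsLeadingExp D p a)
    (hb : IsLeadingExp D p b) : a = b :=
  hD ((hb.2 a ha.1).antisymm (ha.2 b hb.1))

theorem IsLeadingExp.coeff_mul [IsOrderedCancelAddMonoid B] (hD : Function.Injective D)
    (ha : IsLeadingExp D p a) (hb : IsLeadingExp D q b) :
    (p * q).coeff (a + b) = p.coeff a * q.coeff b := by
  refine coeff_mul_add_of_uniqueAdd fun a' b' ha' hb' hab => ?_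
  have hsum : D a' + D b' = D a + D b := by rw [← map_add, ← map_add, hab]
  have hDa : D a' = D a := by
    by_contra hne
    exact (add_lt_add_of_lt_of_le ((ha.2 a' ha').lt_of_ne hne) (hb.2 b' hb')).ne hsum
  exact ⟨hD hDa, hD (add_left_cancel (hsum.trans (by rw [hDa])))⟩

theorem IsLeadingExp.mul [IsOrderedCancelAddMonoid B] [NoZeroDivisors R]
    (hD : Function.Injective D) (ha : IsLeadingExp D p a) (hb : IsLeadingExp D q b) :
    IsLeadingExp D (p * q) (a + b) := by
  classical
  refine ⟨?_, fun s hs => ?_⟩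
  · rw [Finsupp.mem_support_iff, ha.coeff_mul hD hb]
    exact mul_ne_zero (Finsupp.mem_support_iff.1 ha.1) (Finsupp.mem_support_iff.1 hb.1)
  · obtain ⟨u, hu, v, hv, rfl⟩ := Finset.mem_add.1 (support_coeff_mul_subset p q hs)
    rw [map_add, map_add]
    exact add_le_add (ha.2 u hu) (hb.2 v hv)

end LeadingExp

theorem coeff_algebraMap_mul {R A : Type*} [CommSemiring R] [AddMonoid A] (r : R) (x : R[A])
    (a : A) : (algebraMap R R[A] r * x).coeff a = r * x.coeff a := by
  rw [coe_algebraMap, Function.comp_apply, Algebra.algebraMap_self_apply, coeff_single_zero_mul]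

section DomCongr

variable {k A : Type*} [Field k] [AddCommGroup A] {D : A →+ ℝ} {e : A ≃+ A} {μ : ℝ}
  {p q : k[A]} {a b : A} {c : k}

theorem IsLeadingExp.map_domCongr (he : ∀ v, D (e v) = μ * D v) (hμ : 0 < μ)
    (ha : IsLeadingExp D p a) : IsLeadingExp D (domCongr k k e p) (e a) := by
  rw [IsLeadingExp, domCongr_support]
  refine ⟨Finset.mem_map_of_mem _ ha.1, fun s hs => ?_⟩
  obtain ⟨u, hu, rfl⟩ := Finset.mem_map.1 hs
  change D (e u) ≤ D (e a)
  rw [he, he]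
  exact mul_le_mul_of_nonneg_left (ha.2 u hu) hμ.le

theorem IsLeadingExp.eq_of_domCongr_mul_eq (hD : Function.Injective D)
    (he : ∀ v, D (e v) = μ * D v) (hμ : 0 < μ) (hμ1 : μ ≠ 1) (ha : IsLeadingExp D p a)
    (hb : IsLeadingExp D q b) (hc : c ≠ 0)
    (h : domCongr k k e p * q = algebraMap k k[A] c * (p * domCongr k k e q)) :
    a = b ∧ c = 1 := by
  have hC : algebraMap k k[A] c = single 0 c := rfl
  have hl := (ha.map_domCongr he hμ).mul hD hb
  have hr := (isLeadingExp_single (a := 0) hc).mul hD (ha.mul hD (hb.map_domCongr he hμ))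
  rw [h, hC] at hl
  have hexp : D (e a + b) = D (0 + (a + e b)) := congrArg D (hl.unique hD hr)
  simp only [map_add, zero_add, he] at hexp
  have hab : a = b := by
    refine hD (sub_eq_zero.1 ((mul_eq_zero.1 ?_).resolve_left (sub_ne_zero.2 hμ1)))
    linear_combination hexp
  subst hab
  refine ⟨rfl, ?_⟩
  have hcoeff := congrArg (fun x => x.coeff (e a + a)) h
  simp only [coeff_algebraMap_mul] at hcoeff
  rw [(ha.map_domCongr he hμ).coeff_mul hD hb, add_comm, ha.coeff_mul hD (hb.map_domCongr he hμ),
    coeff_domCongr, coeff_domCongr, AddEquiv.symm_apply_apply] at hcoeff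
  have hne : p.coeff a * q.coeff a ≠ 0 :=
    mul_ne_zero (Finsupp.mem_support_iff.1 ha.1) (Finsupp.mem_support_iff.1 hb.1)
  exact (mul_eq_right₀ hne).1 hcoeff.symm

theorem eq_algebraMap_mul_of_domCongr_mul_eq (hD : Function.Injective D)
    (he : ∀ v, D (e v) = μ * D v) (hμ : 0 < μ) (hμ1 : μ ≠ 1) (hp : p ≠ 0) (hq : q ≠ 0)
    (hc : c ≠ 0)
    (h : domCongr k k e p * q = algebraMap k k[A] c * (p * domCongr k k e q)) :
    c = 1 ∧ ∃ r, p = algebraMap k k[A] r * q := by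
  obtain ⟨a, ha⟩ := exists_isLeadingExp D hp
  obtain ⟨b, hb⟩ := exists_isLeadingExp D hq
  obtain ⟨rfl, rfl⟩ := ha.eq_of_domCongr_mul_eq hD he hμ hμ1 hb hc h
  refine ⟨rfl, p.coeff a / q.coeff a, ?_⟩
  by_contra hne
  set p' := p - algebraMap k k[A] (p.coeff a / q.coeff a) * q with hp'
  obtain ⟨a', ha'⟩ := exists_isLeadingExp D (sub_ne_zero.2 hne)
  have h' : domCongr k k e p' * q = algebraMap k k[A] 1 * (p' * domCongr k k e q) := by
    rw [map_one, one_mul] at h ⊢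
    rw [hp', map_sub, map_mul, AlgEquiv.commutes]
    linear_combination h
  obtain ⟨rfl, -⟩ := ha'.eq_of_domCongr_mul_eq hD he hμ hμ1 hb one_ne_zero h'
  apply Finsupp.mem_support_iff.1 ha'.1
  rw [coeff_sub, Finsupp.sub_apply, coeff_algebraMap_mul,
    div_mul_cancel₀ _ (Finsupp.mem_support_iff.1 hb.1), sub_self]

end DomCongr

end AddMonoidAlgebra

/-- `(2 + 2√2, 1)` is a left eigenvector of the matrix `[[5, 1], [4, 1]]` of `Mzz`, for the
eigenvalue `3 + 2√2`. -/
noncomputable def mzzEigenform : ℤ × ℤ →+ ℝ :=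
  AddMonoidHom.mk' (fun v => (2 + 2 * √2) * v.1 + v.2) fun v w => by
    simp only [Prod.fst_add, Prod.snd_add]
    push_cast
    ring

theorem mzzEigenform_injective : Function.Injective mzzEigenform := by
  refine (injective_iff_map_eq_zero _).2 fun ⟨m, n⟩ h => ?_
  change (2 + 2 * √2) * m + n = 0 at h
  obtain rfl : m = 0 := by
    by_contra hm
    refine (irrational_sqrt_two.intCast_mul (mul_ne_zero two_ne_zero hm)).ne_int (-(2 * m + n)) ?_
    push_cast
    linear_combination h
  simp_all

theorem mzzEigenform_Mzz (v : ℤ × ℤ) :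
    mzzEigenform (Mzz v) = (3 + 2 * √2) * mzzEigenform v := by
  change (2 + 2 * √2) * ((5 * v.1 + v.2 : ℤ) : ℝ) + ((4 * v.1 + v.2 : ℤ) : ℝ) =
    (3 + 2 * √2) * ((2 + 2 * √2) * v.1 + v.2)
  push_cast
  linear_combination (-4 * (v.1 : ℝ)) * Real.mul_self_sqrt (zero_le_two : (0 : ℝ) ≤ 2)

/-- If `k` has characteristic zero, `σ̂` is the automorphism of `Frac(B)` induced by `σ`,
`c ∈ Frac(B)` is nonzero and `σ̂(c) = 2^m · c` for some natural number `m`, then `m = 0`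
and `c` lies in the image of `k` in `Frac(B)`. -/
theorem stmt4 (k : Type*) [Field k] [CharZero k]
    (σhat : FractionRing (AddMonoidAlgebra k (ℤ × ℤ)) ≃+*
      FractionRing (AddMonoidAlgebra k (ℤ × ℤ)))
    (hcomp : ∀ b : AddMonoidAlgebra k (ℤ × ℤ),
      σhat (algebraMap (AddMonoidAlgebra k (ℤ × ℤ)) (FractionRing (AddMonoidAlgebra k (ℤ × ℤ))) b)
        = algebraMap (AddMonoidAlgebra k (ℤ × ℤ)) (FractionRing (AddMonoidAlgebra k (ℤ × ℤ)))
          (σB k b))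
    (c : FractionRing (AddMonoidAlgebra k (ℤ × ℤ))) (hc : c ≠ 0) (m : ℕ)
    (h : σhat c = 2 ^ m * c) :
    m = 0 ∧ ∃ a : k,
      c = algebraMap (AddMonoidAlgebra k (ℤ × ℤ)) (FractionRing (AddMonoidAlgebra k (ℤ × ℤ)))
        (algebraMap k (AddMonoidAlgebra k (ℤ × ℤ)) a) := by
  obtain ⟨p, q, hq, rfl⟩ := IsFractionRing.div_surjective (AddMonoidAlgebra k (ℤ × ℤ)) c
  have hq0 : q ≠ 0 := nonZeroDivisors.ne_zero hq
  have hιq := IsFractionRing.to_map_ne_zero_of_mem_nonZeroDivisors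
    (K := FractionRing (AddMonoidAlgebra k (ℤ × ℤ))) hq
  have hp0 : p ≠ 0 := by rintro rfl; simp at hc
  have hpq : σB k p * q = algebraMap k _ (2 ^ m) * (p * σB k q) := by
    apply IsFractionRing.injective (AddMonoidAlgebra k (ℤ × ℤ))
      (FractionRing (AddMonoidAlgebra k (ℤ × ℤ)))
    have hσq := (map_ne_zero σhat).2 hιq
    rw [map_div₀, hcomp, hcomp] at h
    rw [hcomp] at hσq
    field_simp at h
    simp only [map_mul, map_pow, map_ofNat]
    linear_combination h
  obtain ⟨h2m, r, rfl⟩ := AddMonoidAlgebra.eq_algebraMap_mul_of_domCongr_mul_eq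
    mzzEigenform_injective mzzEigenform_Mzz (by positivity)
    (by linarith [Real.sqrt_nonneg 2] : (1 : ℝ) < 3 + 2 * √2).ne' hp0 hq0
    (pow_ne_zero m two_ne_zero) hpq
  refine ⟨?_, r, by rw [map_mul, mul_div_cancel_right₀ _ hιq]⟩
  have : 2 ^ m = 1 := by exact_mod_cast h2m
  simpa using this
end

section
/- Assume k has characteristic zero. Every nonzero ideal I of A with τ(I) = I contains ι(b) for some nonzero b ∈ B; that is, every nonzero τ-invariant ideal of A has nonzero contraction to B. -/
/-- The additive embedding `(m, n) ↦ (m, n, 0)` of `ℤ × ℤ` into `ℤ × ℤ × ℤ`. -/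
noncomputable def embZZ : (ℤ × ℤ) →+ ℤ × ℤ × ℤ where
  toFun v := (v.1, v.2, 0)
  map_zero' := rfl
  map_add' := by rintro ⟨m, n⟩ ⟨m', n'⟩; simp

/-- The `k`-algebra embedding `ι : B = k[x^{±1}, y^{±1}] → A = k[x^{±1}, y^{±1}, u^{±1}]`
induced by `(m, n) ↦ (m, n, 0)`. -/
noncomputable def ιBA (k : Type*) [Field k] :
    AddMonoidAlgebra k (ℤ × ℤ) →ₐ[k] AddMonoidAlgebra k (ℤ × ℤ × ℤ) :=
  AddMonoidAlgebra.mapDomainAlgHom k k embZZ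

/-- The element `x` of `A`. -/
noncomputable def Xa (k : Type*) [Field k] : AddMonoidAlgebra k (ℤ × ℤ × ℤ) :=
  AddMonoidAlgebra.single ((1 : ℤ), (0 : ℤ), (0 : ℤ)) 1

/-- The element `y` of `A`. -/
noncomputable def Ya (k : Type*) [Field k] : AddMonoidAlgebra k (ℤ × ℤ × ℤ) :=
  AddMonoidAlgebra.single ((0 : ℤ), (1 : ℤ), (0 : ℤ)) 1

/-- The element `u` of `A`. -/
noncomputable def Ua (k : Type*) [Field k] : AddMonoidAlgebra k (ℤ × ℤ × ℤ) :=
  AddMonoidAlgebra.single ((0 : ℤ), (0 : ℤ), (1 : ℤ)) 1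

/-!
Write `a ∈ A` as `∑ⱼ ι(aⱼ) uʲ`. Then `τ(ι(b) uʲ) = 2ʲ ι(σ b) uʲ`, where `σ` is the monomial
automorphism of `B` with exponent matrix `[[5, 1], [4, 1]]`. Let `a ∈ I` be nonzero with the fewest
`u`-degrees. If `a` has a single `u`-degree `p`, then `ι(aₚ) = a u⁻ᵖ ∈ I`. Otherwise
`ι(aₚ) τ(a) - 2ᵖ ι(σ aₚ) a ∈ I` has fewer `u`-degrees, so it vanishes, and its `u^q`-component
for some `q ≠ p` reads `2^q aₚ σ(a_q) = 2ᵖ σ(aₚ) a_q`. The linear form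
`φ(m, n) = (2 + 2√2) m + n` is injective on `ℤ²` and satisfies `φ ∘ σ = (3 + 2√2) φ`, so the
monomial order it defines is preserved by `σ`; comparing leading coefficients gives `2^q = 2ᵖ`,
impossible in characteristic zero.
-/

open AddMonoidAlgebra

namespace AddMonoidAlgebra

section LeadingExponent

variable {k G : Type*} [Field k] [AddCommMonoid G]

def IsLeadingExponent (φ : G → ℝ) (f : k[G]) (t : G) : Prop :=
  t ∈ f.coeff.support ∧ IsMaxOn φ f.coeff.support t

theorem exists_isLeadingExponent (φ : G → ℝ) {f : k[G]} (hf : f ≠ 0) :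
    ∃ t, IsLeadingExponent φ f t := by
  obtain ⟨t, ht, hmax⟩ := f.coeff.support.exists_max_image φ
    (Finsupp.support_nonempty_iff.2 (mt coeff_eq_zero.1 hf))
  exact ⟨t, ht, fun v hv => hmax v hv⟩

variable {φ : G →+ ℝ} {f g : k[G]} {s t : G}

theorem IsLeadingExponent.eq (hφ : Function.Injective φ) (hs : IsLeadingExponent φ f s)
    (ht : IsLeadingExponent φ f t) : s = t :=
  hφ (le_antisymm (ht.2 hs.1) (hs.2 ht.1))

theorem IsLeadingExponent.smul {c : k} (hc : c ≠ 0) (ht : IsLeadingExponent φ f t) :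
    IsLeadingExponent φ (c • f) t := by
  rwa [IsLeadingExponent, coeff_smul, Finsupp.support_smul_eq hc]

theorem IsLeadingExponent.coeff_mul (hφ : Function.Injective φ) (hs : IsLeadingExponent φ f s)
    (ht : IsLeadingExponent φ g t) : (f * g).coeff (s + t) = f.coeff s * g.coeff t := by
  refine coeff_mul_add_of_uniqueAdd fun a b ha hb hab => ?_
  have hsum : φ a + φ b = φ s + φ t := by rw [← map_add, ← map_add, hab]
  have ha' : φ a ≤ φ s := hs.2 ha
  have hb' : φ b ≤ φ t := ht.2 hb
  exact ⟨hφ (by linarith), hφ (by linarith)⟩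

theorem IsLeadingExponent.mul (hφ : Function.Injective φ) (hs : IsLeadingExponent φ f s)
    (ht : IsLeadingExponent φ g t) : IsLeadingExponent φ (f * g) (s + t) := by
  classical
  refine ⟨?_, fun v hv => ?_⟩
  · rw [Finsupp.mem_support_iff, hs.coeff_mul hφ ht]
    exact mul_ne_zero (Finsupp.mem_support_iff.1 hs.1) (Finsupp.mem_support_iff.1 ht.1)
  · obtain ⟨a, ha, b, hb, rfl⟩ := Finset.mem_add.1 (support_coeff_mul_subset f g hv)
    show φ (a + b) ≤ φ (s + t)
    rw [map_add, map_add]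
    exact add_le_add (hs.2 ha) (ht.2 hb)

theorem IsLeadingExponent.domCongr {M : G ≃+ G} {r : ℝ} (hr : 0 < r)
    (hM : ∀ v, φ (M v) = r * φ v) (ht : IsLeadingExponent φ f t) :
    IsLeadingExponent φ (domCongr k k M f) (M t) := by
  refine ⟨by simpa [domCongr_support] using ht.1, fun v hv => ?_⟩
  rw [domCongr_support, Finset.mem_coe, Finset.mem_map_equiv] at hv
  show φ v ≤ φ (M t)
  rw [← M.apply_symm_apply v, hM, hM]
  exact mul_le_mul_of_nonneg_left (ht.2 hv) hr.le

theorem eq_of_smul_mul_domCongr_eq (hφ : Function.Injective φ) {M : G ≃+ G} {r : ℝ}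
    (hr : 0 < r) (hM : ∀ v, φ (M v) = r * φ v) (hg : g ≠ 0) {h : k[G]} (hh : h ≠ 0)
    {c c' : k} (hc : c ≠ 0) (hc' : c' ≠ 0)
    (hgh : c • (g * domCongr k k M h) = c' • (domCongr k k M g * h)) : c = c' := by
  obtain ⟨s, hs⟩ := exists_isLeadingExponent φ hg
  obtain ⟨t, ht⟩ := exists_isLeadingExponent φ hh
  have hL := (hs.mul hφ (ht.domCongr hr hM)).smul hc
  have hR := ((hs.domCongr hr hM).mul hφ ht).smul hc'
  rw [hgh] at hL
  have hst : s + M t = M s + t := hL.eq hφ hR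
  have hcoeff := congrArg (fun p => p.coeff (s + M t)) hgh
  simp only [coeff_smul, Finsupp.smul_apply, smul_eq_mul] at hcoeff
  rw [hs.coeff_mul hφ (ht.domCongr hr hM), hst, (hs.domCongr hr hM).coeff_mul hφ ht,
    coeff_domCongr, coeff_domCongr, M.symm_apply_apply, M.symm_apply_apply] at hcoeff
  exact mul_right_cancel₀ (mul_ne_zero (Finsupp.mem_support_iff.1 hs.1)
    (Finsupp.mem_support_iff.1 ht.1)) hcoeff

end LeadingExponent

end AddMonoidAlgebra

def tauExp : ℤ × ℤ ≃+ ℤ × ℤ where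
  toFun v := (5 * v.1 + v.2, 4 * v.1 + v.2)
  invFun w := (w.1 - w.2, 5 * w.2 - 4 * w.1)
  left_inv v := by ext <;> dsimp <;> ring
  right_inv w := by ext <;> dsimp <;> ring
  map_add' v w := by ext <;> dsimp <;> ring

noncomputable def tauExpEigenform : ℤ × ℤ →+ ℝ where
  toFun v := (2 + 2 * √2) * v.1 + v.2
  map_zero' := by simp
  map_add' v w := by simp only [Prod.fst_add, Prod.snd_add]; push_cast; ring

theorem tauExpEigenform_injective : Function.Injective tauExpEigenform := by
  refine (injective_iff_map_eq_zero _).2 fun ⟨m, n⟩ h => ?_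
  change (2 + 2 * √2) * m + n = 0 at h
  obtain rfl | hm := eq_or_ne m 0
  · simp_all
  · have : Irrational ((2 + 2 * √2) * m + n) :=
      (((irrational_sqrt_two.natCast_mul two_ne_zero).natCast_add 2).mul_intCast hm).add_intCast n
    exact absurd h (by exact_mod_cast this.ne_zero)

theorem tauExpEigenform_tauExp (v : ℤ × ℤ) :
    tauExpEigenform (tauExp v) = (3 + 2 * √2) * tauExpEigenform v := by
  change (2 + 2 * √2) * ((5 * v.1 + v.2 : ℤ) : ℝ) + ((4 * v.1 + v.2 : ℤ) : ℝ)
    = (3 + 2 * √2) * ((2 + 2 * √2) * v.1 + v.2)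
  push_cast
  linear_combination (-4 * (v.1 : ℝ)) * Real.sq_sqrt (zero_le_two : (0 : ℝ) ≤ 2)

theorem two_zpow_injective (k : Type*) [Field k] [CharZero k] :
    Function.Injective fun j : ℤ => (2 : k) ^ j := by
  intro p q h
  have h2 : (((2 : ℚ) ^ p : ℚ) : k) = ((2 : ℚ) ^ q : ℚ) := by push_cast; exact h
  exact zpow_right_injective₀ (by norm_num : (0 : ℚ) < 2) (by norm_num) (Rat.cast_injective h2)

section UComponent

variable {k : Type*} [Field k]

def uSlice (j : ℤ) (w : ℤ × ℤ) : ℤ × ℤ × ℤ := (w.1, w.2, j)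

theorem uSlice_injective (j : ℤ) : Function.Injective (uSlice j) := by
  rintro ⟨a, b⟩ ⟨c, d⟩ h
  simpa [uSlice] using h

noncomputable def uComponent (j : ℤ) : k[ℤ × ℤ × ℤ] →+ k[ℤ × ℤ] :=
  comapDomainAddMonoidHom (uSlice j) (uSlice_injective j)

theorem coeff_uComponent (j : ℤ) (f : k[ℤ × ℤ × ℤ]) (w : ℤ × ℤ) :
    (uComponent j f).coeff w = f.coeff (w.1, w.2, j) := rfl

noncomputable def uSupport (f : k[ℤ × ℤ × ℤ]) : Finset ℤ :=
  f.coeff.support.image fun v => v.2.2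

theorem mem_uSupport {f : k[ℤ × ℤ × ℤ]} {j : ℤ} : j ∈ uSupport f ↔ uComponent j f ≠ 0 := by
  simp only [uSupport, Finset.mem_image, Finsupp.mem_support_iff, ne_eq, ← coeff_inj,
    coeff_zero, Finsupp.ext_iff, coeff_uComponent, Finsupp.coe_zero, Pi.zero_apply, not_forall]
  constructor
  · rintro ⟨⟨a, b, c⟩, hv, rfl⟩
    exact ⟨(a, b), hv⟩
  · rintro ⟨⟨a, b⟩, hw⟩
    exact ⟨(a, b, j), hw, rfl⟩

theorem uSupport_nonempty {f : k[ℤ × ℤ × ℤ]} (hf : f ≠ 0) : (uSupport f).Nonempty :=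
  (Finsupp.support_nonempty_iff.2 (mt coeff_eq_zero.1 hf)).image _

theorem ιBA_single (s : ℤ × ℤ) (c : k) : ιBA k (single s c) = single (s.1, s.2, 0) c :=
  mapDomain_single

theorem uComponent_ιBA_mul (j : ℤ) (b : k[ℤ × ℤ]) (f : k[ℤ × ℤ × ℤ]) :
    uComponent j (ιBA k b * f) = b * uComponent j f := by
  induction b using induction_linear with
  | zero => simp
  | add b b' hb hb' => rw [map_add, add_mul, map_add, hb, hb', add_mul]
  | single s c =>
    ext w
    rw [ιBA_single, coeff_uComponent, coeff_single_mul_apply, coeff_single_mul_apply,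
      coeff_uComponent]
    congr 2
    simp

theorem ιBA_uComponent {f : k[ℤ × ℤ × ℤ]} {p : ℤ} (hf : uSupport f ⊆ {p}) :
    ιBA k (uComponent p f) = f * single (0, 0, -p) 1 := by
  have hcomap : uComponent p f = comapDomain (uSlice 0) (uSlice_injective 0)
      (f * single (0, 0, -p) 1) := by
    ext w
    simp [coeff_uComponent, uSlice]
  have hrange : ↑(f * single (0, 0, -p) 1).coeff.support ⊆ Set.range (uSlice 0) := by
    rintro ⟨a, b, c⟩ hv
    simp only [Finset.mem_coe, Finsupp.mem_support_iff, coeff_mul_single_apply, mul_one] at hv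
    have : c + p ∈ uSupport f := Finset.mem_image.2 ⟨_, Finsupp.mem_support_iff.2 hv, by simp⟩
    have hc : c = 0 := by simpa using hf this
    exact ⟨(a, b), by simp [uSlice, hc]⟩
  rw [hcomap]
  exact mapDomain_comapDomain hrange _

theorem uComponent_single (j a b p : ℤ) (c : k) :
    uComponent j (single (a, b, p) c) = if p = j then single (a, b) c else 0 := by
  split_ifs with hp
  · subst hp
    exact comapDomain_single_map (uSlice p) (uSlice_injective p) (a, b) c
  · ext w
    simp [coeff_uComponent, coeff_single, Ne.symm hp]

end UComponent

theorem MonoidHom.ext_mint₃ {R : Type*} [Monoid R] {F G : Multiplicative (ℤ × ℤ × ℤ) →* R}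
    (h₁ : F (.ofAdd (1, 0, 0)) = G (.ofAdd (1, 0, 0)))
    (h₂ : F (.ofAdd (0, 1, 0)) = G (.ofAdd (0, 1, 0)))
    (h₃ : F (.ofAdd (0, 0, 1)) = G (.ofAdd (0, 0, 1))) : F = G := by
  have hpow : ∀ e, F e = G e → ∀ m : ℤ, F (e ^ m) = G (e ^ m) := fun e he m =>
    DFunLike.congr_fun (MonoidHom.ext_mint (f := F.comp (zpowersHom _ e))
      (g := G.comp (zpowersHom _ e)) (by simpa using he)) (.ofAdd m)
  refine MonoidHom.ext fun v => ?_
  have hv : v = .ofAdd (1, 0, 0) ^ v.toAdd.1 * .ofAdd (0, 1, 0) ^ v.toAdd.2.1 *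
      .ofAdd (0, 0, 1) ^ v.toAdd.2.2 := by
    apply Multiplicative.toAdd.injective
    simp
  rw [hv, map_mul, map_mul, map_mul, map_mul, hpow _ h₁, hpow _ h₂, hpow _ h₃]

section Tau

variable {k : Type*} [Field k] [NeZero (2 : k)]

noncomputable def tauMonomial : Multiplicative (ℤ × ℤ × ℤ) →* k[ℤ × ℤ × ℤ] where
  toFun v := single (5 * v.toAdd.1 + v.toAdd.2.1, 4 * v.toAdd.1 + v.toAdd.2.1, v.toAdd.2.2)
    ((2 : k) ^ v.toAdd.2.2)
  map_one' := by simp [one_def]; rfl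
  map_mul' v w := by
    simp only [toAdd_mul, Prod.fst_add, Prod.snd_add, single_mul_single,
      zpow_add₀ (NeZero.ne (2 : k))]
    congr 1
    ext <;> dsimp <;> ring

theorem tau_single (τ : k[ℤ × ℤ × ℤ] ≃ₐ[k] k[ℤ × ℤ × ℤ])
    (hτx : τ (Xa k) = Xa k ^ 5 * Ya k ^ 4) (hτy : τ (Ya k) = Xa k * Ya k)
    (hτu : τ (Ua k) = 2 * Ua k) (m n p : ℤ) (c : k) :
    τ (single (m, n, p) c) = single (5 * m + n, 4 * m + n, p) ((2 : k) ^ p * c) := by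
  have hτ : (τ : k[ℤ × ℤ × ℤ] →* k[ℤ × ℤ × ℤ]).comp (of k _) = tauMonomial := by
    apply MonoidHom.ext_mint₃
    · change τ (Xa k) = single (5 * 1 + 0, 4 * 1 + 0, 0) ((2 : k) ^ (0 : ℤ))
      rw [hτx, Xa, Ya, single_pow, single_pow, single_mul_single]
      norm_num
    · change τ (Ya k) = single (5 * 0 + 1, 4 * 0 + 1, 0) ((2 : k) ^ (0 : ℤ))
      rw [hτy, Xa, Ya, single_mul_single]
      norm_num
    · change τ (Ua k) = single (5 * 0 + 0, 4 * 0 + 0, 1) ((2 : k) ^ (1 : ℤ))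
      rw [hτu, Ua, ← smul_eq_mul, ← map_ofNat (algebraMap k k[ℤ × ℤ × ℤ]), algebraMap_smul,
        smul_single]
      norm_num
  have h1 : τ (single (m, n, p) 1) = single (5 * m + n, 4 * m + n, p) ((2 : k) ^ p) :=
    DFunLike.congr_fun hτ (.ofAdd (m, n, p))
  calc τ (single (m, n, p) c) = c • τ (single (m, n, p) 1) := by
        rw [← map_smul, smul_single, smul_eq_mul, mul_one]
    _ = _ := by rw [h1, smul_single, smul_eq_mul, mul_comm c]

theorem uComponent_tau (τ : k[ℤ × ℤ × ℤ] ≃ₐ[k] k[ℤ × ℤ × ℤ])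
    (hτx : τ (Xa k) = Xa k ^ 5 * Ya k ^ 4) (hτy : τ (Ya k) = Xa k * Ya k)
    (hτu : τ (Ua k) = 2 * Ua k) (j : ℤ) (f : k[ℤ × ℤ × ℤ]) :
    uComponent j (τ f) = (2 : k) ^ j • domCongr k k tauExp (uComponent j f) := by
  induction f using induction_linear with
  | zero => simp
  | add f g hf hg => rw [map_add, map_add, hf, hg, map_add, map_add, smul_add]
  | single v c =>
    obtain ⟨m, n, p⟩ := v
    rw [tau_single τ hτx hτy hτu, uComponent_single, uComponent_single]
    split_ifs with hp
    · subst hp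
      rw [domCongr_single, smul_single, smul_eq_mul]
      rfl
    · simp

end Tau

section Main

variable {k : Type*} [Field k] [CharZero k]

theorem eq_of_zpow_smul_mul_tauExp_eq {g h : k[ℤ × ℤ]} (hg : g ≠ 0) (hh : h ≠ 0) {p q : ℤ}
    (hgh : (2 : k) ^ q • (g * domCongr k k tauExp h) =
      (2 : k) ^ p • (domCongr k k tauExp g * h)) : q = p :=
  two_zpow_injective k <| eq_of_smul_mul_domCongr_eq tauExpEigenform_injective
    (by positivity) tauExpEigenform_tauExp hg hh (zpow_ne_zero _ two_ne_zero)
    (zpow_ne_zero _ two_ne_zero) hgh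

theorem exists_ιBA_mem_of_mem (τ : k[ℤ × ℤ × ℤ] → k[ℤ × ℤ × ℤ])
    (hτ : ∀ j f, uComponent j (τ f) = (2 : k) ^ j • domCongr k k tauExp (uComponent j f))
    {I : Ideal k[ℤ × ℤ × ℤ]} (hI : ∀ a ∈ I, τ a ∈ I) {a : k[ℤ × ℤ × ℤ]} (ha : a ∈ I)
    (ha0 : a ≠ 0) : ∃ b, b ≠ 0 ∧ ιBA k b ∈ I := by
  induction hn : (uSupport a).card using Nat.strong_induction_on generalizing a with
  | _ n ih =>
    obtain ⟨p, hp⟩ := uSupport_nonempty ha0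
    by_cases hsub : uSupport a ⊆ {p}
    · exact ⟨uComponent p a, mem_uSupport.1 hp, ιBA_uComponent hsub ▸ I.mul_mem_right _ ha⟩
    obtain ⟨q, hq, hqp⟩ : ∃ q ∈ uSupport a, q ≠ p := by
      simpa [Finset.subset_iff] using hsub
    set σ := domCongr k k tauExp
    set e := ιBA k (uComponent p a) * τ a - ιBA k ((2 : k) ^ p • σ (uComponent p a)) * a
    have heI : e ∈ I := I.sub_mem (I.mul_mem_left _ (hI a ha)) (I.mul_mem_left _ ha)
    have he : ∀ j, uComponent j e = (2 : k) ^ j • (uComponent p a * σ (uComponent j a))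
        - (2 : k) ^ p • (σ (uComponent p a) * uComponent j a) := fun j => by
      rw [map_sub, uComponent_ιBA_mul, uComponent_ιBA_mul, hτ, mul_smul_comm, smul_mul_assoc]
    have hsupp : uSupport e ⊆ (uSupport a).erase p := by
      intro j hj
      rw [mem_uSupport, he] at hj
      refine Finset.mem_erase.2 ⟨fun hjp => hj (by rw [hjp, mul_comm, sub_self]), ?_⟩
      rw [mem_uSupport]
      intro hj0
      exact hj (by rw [hj0, map_zero, mul_zero, mul_zero, smul_zero, smul_zero, sub_self])
    by_cases he0 : e = 0
    · have hq0 := he q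
      rw [he0, map_zero, eq_comm, sub_eq_zero] at hq0
      exact absurd (eq_of_zpow_smul_mul_tauExp_eq (mem_uSupport.1 hp) (mem_uSupport.1 hq) hq0) hqp
    · refine ih _ ?_ heI he0 rfl
      calc (uSupport e).card ≤ ((uSupport a).erase p).card := Finset.card_le_card hsupp
        _ < n := hn ▸ Finset.card_erase_lt_of_mem hp

end Main

/-- If `k` has characteristic zero and `τ` is the `k`-algebra automorphism of `A` with
`τ(x) = x^5 y^4`, `τ(y) = x y`, `τ(u) = 2u`, then every nonzero `τ`-invariant ideal of `A`
contains `ι(b)` for some nonzero `b ∈ B`. -/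
theorem stmt5 (k : Type*) [Field k] [CharZero k]
    (τ : AddMonoidAlgebra k (ℤ × ℤ × ℤ) ≃ₐ[k] AddMonoidAlgebra k (ℤ × ℤ × ℤ))
    (hτx : τ (Xa k) = Xa k ^ 5 * Ya k ^ 4)
    (hτy : τ (Ya k) = Xa k * Ya k)
    (hτu : τ (Ua k) = 2 * Ua k)
    (I : Ideal (AddMonoidAlgebra k (ℤ × ℤ × ℤ)))
    (hI0 : I ≠ ⊥) (hIinv : Ideal.map τ I = I) :
    ∃ b : AddMonoidAlgebra k (ℤ × ℤ), b ≠ 0 ∧ ιBA k b ∈ I := by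
  obtain ⟨a, ha, ha0⟩ := Submodule.exists_mem_ne_zero_of_ne_bot hI0
  exact exists_ιBA_mem_of_mem τ (uComponent_tau τ hτx hτy hτu)
    (fun b hb => hIinv ▸ Ideal.mem_map_of_mem τ hb) ha ha0
end

section
/- Assume k has characteristic zero. Let τ̂ denote the automorphism of the fraction field Frac(A) induced by τ. Every element f ∈ Frac(A) with τ̂(f) = f lies in the image of k in Frac(A); that is, the fixed field of τ̂ on Frac(A) is k. -/
instance (k : Type*) [Field k] : IsDomain (AddMonoidAlgebra k (ℤ × ℤ × ℤ)) :=
  NoZeroDivisors.to_isDomain _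

/-!
On monomials `τ` acts by `x^v ↦ 2^{v₃} x^{Mv}`, where `M` is `!![5, 1; 4, 1]` on the first two
exponents and the identity on the third. Order the monomials by `v ↦ ((2 + 2√2) v₁ + v₂, v₃)`
(lexicographically); as `(2 + 2√2, 1)` is a left eigenvector of `M` for the positive eigenvalue
`3 + 2√2`, `τ` maps the leading exponent `v` of a Laurent polynomial to `Mv`. Write a fixed
fraction as `p / q`, so that `τ(p) q = p τ(q)`. Comparing leading terms gives `Mv + w = v + Mw`
and `2^{v₃} = 2^{w₃}` for the leading exponents `v` of `p` and `w` of `q`; since `M - 1` is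
invertible and `2` is not a root of unity, `v = w`. The same then holds for `p - c q`, with `c`
chosen to cancel the leading term, which forces `p = c q`.
-/

open AddMonoidAlgebra

section LeadingExponent

variable {R G B : Type*} [Semiring R] [AddCommMonoid G] [AddCommMonoid B] [LinearOrder B]
  {E : G →+ B} {p q : R[G]} {v w : G}

variable (E) in
def IsLeadingExponent (p : R[G]) (v : G) : Prop :=
  v ∈ p.coeff.support ∧ ∀ u ∈ p.coeff.support, E u ≤ E v

theorem IsLeadingExponent.coeff_ne_zero (hv : IsLeadingExponent E p v) : p.coeff v ≠ 0 :=
  Finsupp.mem_support_iff.mp hv.1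

theorem exists_isLeadingExponent (hp : p ≠ 0) : ∃ v, IsLeadingExponent E p v :=
  p.coeff.support.exists_max_image E (Finsupp.support_nonempty_iff.mpr (coeff_eq_zero.not.mpr hp))

theorem IsLeadingExponent.unique (hE : Function.Injective E) (hv : IsLeadingExponent E p v)
    (hw : IsLeadingExponent E p w) : v = w :=
  hE (le_antisymm (hw.2 v hv.1) (hv.2 w hw.1))

variable [IsOrderedCancelAddMonoid B]

theorem IsLeadingExponent.uniqueAdd (hE : Function.Injective E) (hv : IsLeadingExponent E p v)
    (hw : IsLeadingExponent E q w) : UniqueAdd p.coeff.support q.coeff.support v w := by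
  intro a b ha hb hab
  have hsum : E a + E b = E v + E w := by rw [← map_add, ← map_add, hab]
  obtain ⟨hEa, hEb⟩ := (add_eq_add_iff_eq_and_eq (hv.2 a ha) (hw.2 b hb)).mp hsum
  exact ⟨hE hEa, hE hEb⟩

theorem IsLeadingExponent.coeff_mul (hE : Function.Injective E) (hv : IsLeadingExponent E p v)
    (hw : IsLeadingExponent E q w) : (p * q).coeff (v + w) = p.coeff v * q.coeff w :=
  coeff_mul_add_of_uniqueAdd (hv.uniqueAdd hE hw)

theorem IsLeadingExponent.mul [NoZeroDivisors R] (hE : Function.Injective E)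
    (hv : IsLeadingExponent E p v) (hw : IsLeadingExponent E q w) :
    IsLeadingExponent E (p * q) (v + w) := by
  classical
  refine ⟨?_, fun u hu => ?_⟩
  · rw [Finsupp.mem_support_iff, hv.coeff_mul hE hw]
    exact mul_ne_zero hv.coeff_ne_zero hw.coeff_ne_zero
  · obtain ⟨a, ha, b, hb, rfl⟩ := Finset.mem_add.mp (support_coeff_mul_subset p q hu)
    rw [map_add, map_add]
    exact add_le_add (hv.2 a ha) (hw.2 b hb)

end LeadingExponent

section Twist

variable {k G : Type*} [CommSemiring k] [AddCommMonoid G]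

noncomputable def twistMonomial (φ : G ≃+ G) (χ : Multiplicative G →* kˣ) :
    Multiplicative G →* k[G] where
  toFun g := single (φ g.toAdd) (χ g : k)
  map_one' := by simp [one_def]
  map_mul' g h := by simp [single_mul_single]

noncomputable def twistMap (φ : G ≃+ G) (χ : Multiplicative G →* kˣ) : k[G] →ₐ[k] k[G] :=
  lift k k[G] G (twistMonomial φ χ)

variable {φ : G ≃+ G} {χ : Multiplicative G →* kˣ}

theorem twistMap_single (v : G) (r : k) :
    twistMap φ χ (single v r) = single (φ v) (χ (.ofAdd v) * r) := by
  simp [twistMap, twistMonomial, smul_single, mul_comm]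

theorem coeff_twistMap_apply (p : k[G]) (v : G) :
    (twistMap φ χ p).coeff (φ v) = χ (.ofAdd v) * p.coeff v := by
  classical
  induction p using AddMonoidAlgebra.induction_linear with
  | zero => simp
  | add p q hp hq => simp [hp, hq, mul_add]
  | single u r =>
    rw [twistMap_single, coeff_single, coeff_single, Finsupp.single_apply, Finsupp.single_apply,
      φ.injective.eq_iff]
    split_ifs with h
    · rw [h]
    · rw [mul_zero]

theorem mem_support_twistMap {p : k[G]} {v : G} :
    φ v ∈ (twistMap φ χ p).coeff.support ↔ v ∈ p.coeff.support := by
  simp only [Finsupp.mem_support_iff, coeff_twistMap_apply, ne_eq, Units.mul_right_eq_zero]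

theorem isLeadingExponent_twistMap {B : Type*} [AddCommMonoid B] [LinearOrder B] {E : G →+ B}
    (hmono : ∀ v w, E v ≤ E w → E (φ v) ≤ E (φ w)) {p : k[G]} {v : G}
    (hv : IsLeadingExponent E p v) : IsLeadingExponent E (twistMap φ χ p) (φ v) := by
  refine ⟨mem_support_twistMap.mpr hv.1, fun u hu => ?_⟩
  rw [← φ.apply_symm_apply u] at hu ⊢
  exact hmono _ _ (hv.2 _ (mem_support_twistMap.mp hu))

end Twist

theorem AlgHom.eq_twistMap {k G : Type*} [CommSemiring k] [AddCommGroup G] {φ : G ≃+ G}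
    {χ : Multiplicative G →* kˣ} {s : Set (Multiplicative G)} (hs : Subgroup.closure s = ⊤)
    (σ : k[G] →ₐ[k] k[G]) (h : ∀ g ∈ s, σ (of k G g) = twistMonomial φ χ g) :
    σ = twistMap φ χ :=
  ((lift k k[G] G).symm_apply_eq).mp (MonoidHom.eq_of_eqOn_dense hs h)

section TwistFixed

variable {k G B : Type*} [Field k] [AddCommMonoid G] [AddCommMonoid B] [LinearOrder B]
  [IsOrderedCancelAddMonoid B] {E : G →+ B} {φ : G ≃+ G} {χ : Multiplicative G →* kˣ}

theorem IsLeadingExponent.eq_of_twistMap_mul_eq (hE : Function.Injective E)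
    (hmono : ∀ v w, E v ≤ E w → E (φ v) ≤ E (φ w))
    (hsep : ∀ v w, φ v + w = v + φ w → χ (.ofAdd v) = χ (.ofAdd w) → v = w)
    {p q : k[G]} (hrel : twistMap φ χ p * q = p * twistMap φ χ q) {v w : G}
    (hv : IsLeadingExponent E p v) (hw : IsLeadingExponent E q w) : v = w := by
  have hτv := isLeadingExponent_twistMap (χ := χ) hmono hv
  have hτw := isLeadingExponent_twistMap (χ := χ) hmono hw
  have hvw : IsLeadingExponent E (twistMap φ χ p * q) (φ v + w) := hτv.mul hE hw
  have hwv : IsLeadingExponent E (p * twistMap φ χ q) (v + φ w) := hv.mul hE hτw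
  have hexp : φ v + w = v + φ w := (hrel ▸ hvw).unique hE hwv
  have hcoeff : (χ (.ofAdd v) : k) * (p.coeff v * q.coeff w)
      = χ (.ofAdd w) * (p.coeff v * q.coeff w) :=
    calc (χ (.ofAdd v) : k) * (p.coeff v * q.coeff w)
        _ = (twistMap φ χ p * q).coeff (φ v + w) := by
          rw [hτv.coeff_mul hE hw, coeff_twistMap_apply, mul_assoc]
        _ = (p * twistMap φ χ q).coeff (v + φ w) := by rw [hrel, hexp]
        _ = χ (.ofAdd w) * (p.coeff v * q.coeff w) := by
          rw [hv.coeff_mul hE hτw, coeff_twistMap_apply, mul_left_comm]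
  refine hsep v w hexp (Units.ext (mul_right_cancel₀ ?_ hcoeff))
  exact mul_ne_zero hv.coeff_ne_zero hw.coeff_ne_zero

theorem eq_smul_of_twistMap_mul_eq (hE : Function.Injective E)
    (hmono : ∀ v w, E v ≤ E w → E (φ v) ≤ E (φ w))
    (hsep : ∀ v w, φ v + w = v + φ w → χ (.ofAdd v) = χ (.ofAdd w) → v = w)
    {p q : k[G]} (hq : q ≠ 0) (hrel : twistMap φ χ p * q = p * twistMap φ χ q) :
    ∃ a : k, p = a • q := by
  obtain ⟨w, hw⟩ := exists_isLeadingExponent (E := E) hq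
  set a := p.coeff w / q.coeff w
  refine ⟨a, by_contra fun hne => ?_⟩
  have hrel' : twistMap φ χ (p - a • q) * q = (p - a • q) * twistMap φ χ q := by
    rw [map_sub, map_smul, sub_mul, sub_mul, smul_mul_assoc, smul_mul_assoc, hrel, mul_comm q]
  obtain ⟨v, hv⟩ := exists_isLeadingExponent (E := E) (sub_ne_zero.mpr hne)
  obtain rfl := hv.eq_of_twistMap_mul_eq hE hmono hsep hrel' hw
  apply hv.coeff_ne_zero
  rw [coeff_sub, coeff_smul, Finsupp.sub_apply, Finsupp.smul_apply, smul_eq_mul,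
    div_mul_cancel₀ _ hw.coeff_ne_zero, sub_self]

end TwistFixed

theorem exists_eq_div_of_map_eq_self {A K F : Type*} [CommRing A] [IsDomain A] [Field K]
    [Algebra A K] [IsFractionRing A K] [FunLike F K K] [RingHomClass F K K] (σ : A → A) (σ' : F)
    (hσ : ∀ a, σ' (algebraMap A K a) = algebraMap A K (σ a)) {f : K} (hf : σ' f = f) :
    ∃ p q : A, q ≠ 0 ∧ σ p * q = p * σ q ∧ f = algebraMap A K p / algebraMap A K q := by
  obtain ⟨p, q, hq, rfl⟩ := IsFractionRing.div_surjective (A := A) f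
  have hq₀ : algebraMap A K q ≠ 0 := IsFractionRing.to_map_ne_zero_of_mem_nonZeroDivisors hq
  have hσq₀ : algebraMap A K (σ q) ≠ 0 := hσ q ▸ (map_ne_zero σ').mpr hq₀
  refine ⟨p, q, nonZeroDivisors.ne_zero hq, IsFractionRing.injective A K ?_, rfl⟩
  rw [map_div₀, hσ, hσ, div_eq_div_iff hσq₀ hq₀] at hf
  simpa only [map_mul] using hf

theorem Irrational.eq_of_mul_add_intCast_eq {α : ℝ} (hα : Irrational α) {a b c d : ℤ}
    (h : α * a + b = α * c + d) : a = c ∧ b = d := by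
  have hac : a = c := by
    by_contra hne
    refine hα.ne_rational (d - b) (a - c) ?_
    rw [eq_div_iff (by exact_mod_cast sub_ne_zero.mpr hne)]
    push_cast
    linarith
  subst hac
  exact ⟨rfl, by exact_mod_cast (add_left_cancel h : (b : ℝ) = d)⟩

theorem closure_ofAdd_basis_eq_top :
    Subgroup.closure {.ofAdd (1, 0, 0), .ofAdd (0, 1, 0), .ofAdd (0, 0, 1)} =
      (⊤ : Subgroup (Multiplicative (ℤ × ℤ × ℤ))) := by
  refine eq_top_iff.mpr fun g _ => ?_
  have hg : g = .ofAdd (1, 0, 0) ^ g.toAdd.1 * .ofAdd (0, 1, 0) ^ g.toAdd.2.1 *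
      .ofAdd (0, 0, 1) ^ g.toAdd.2.2 := by
    apply Multiplicative.toAdd.injective
    simp
  rw [hg]
  refine mul_mem (mul_mem ?_ ?_) ?_ <;> exact zpow_mem (Subgroup.subset_closure (by simp)) _

def tauExponent : (ℤ × ℤ × ℤ) ≃+ (ℤ × ℤ × ℤ) where
  toFun v := (5 * v.1 + v.2.1, 4 * v.1 + v.2.1, v.2.2)
  invFun v := (v.1 - v.2.1, -4 * v.1 + 5 * v.2.1, v.2.2)
  left_inv v := by ext <;> dsimp only <;> ring
  right_inv v := by ext <;> dsimp only <;> ring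
  map_add' v w := by ext <;> dsimp only [Prod.fst_add, Prod.snd_add] <;> ring

def tauChar (k : Type*) [Field k] [NeZero (2 : k)] : Multiplicative (ℤ × ℤ × ℤ) →* kˣ :=
  (zpowersHom kˣ (Units.mk0 2 two_ne_zero)).comp
    (AddMonoidHom.toMultiplicative ((AddMonoidHom.snd ℤ ℤ).comp (AddMonoidHom.snd ℤ (ℤ × ℤ))))

theorem tauChar_apply (k : Type*) [Field k] [NeZero (2 : k)] (v : ℤ × ℤ × ℤ) :
    (tauChar k (.ofAdd v) : k) = 2 ^ v.2.2 := by
  simp [tauChar]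

noncomputable def eigenOrder : ℤ × ℤ × ℤ →+ Lex (ℝ × ℤ) where
  toFun v := toLex ((2 + 2 * √2) * v.1 + v.2.1, v.2.2)
  map_zero' := by simp
  map_add' v w := by
    rw [← toLex_add]
    congr 1
    ext
    · simp only [Prod.fst_add, Prod.snd_add, Int.cast_add]
      ring
    · rfl

theorem eigenOrder_apply (v : ℤ × ℤ × ℤ) :
    eigenOrder v = toLex ((2 + 2 * √2) * v.1 + v.2.1, v.2.2) := rfl

theorem eigenOrder_injective : Function.Injective eigenOrder := by
  intro v w h
  have hα : Irrational (2 + 2 * √2) := by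
    simpa using (irrational_sqrt_two.intCast_mul two_ne_zero).intCast_add 2
  obtain ⟨h12, h3⟩ := Prod.ext_iff.mp (toLex.injective h)
  obtain ⟨h1, h2⟩ := hα.eq_of_mul_add_intCast_eq h12
  exact Prod.ext h1 (Prod.ext h2 h3)

theorem eigenOrder_tauExponent_le {v w : ℤ × ℤ × ℤ} (h : eigenOrder v ≤ eigenOrder w) :
    eigenOrder (tauExponent v) ≤ eigenOrder (tauExponent w) := by
  have hsq : √2 * √2 = 2 := Real.mul_self_sqrt zero_le_two
  have heig : ∀ u : ℤ × ℤ × ℤ, (2 + 2 * √2) * (tauExponent u).1 + (tauExponent u).2.1 =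
      (3 + 2 * √2) * ((2 + 2 * √2) * u.1 + u.2.1) := fun u => by
    simp only [tauExponent, AddEquiv.coe_mk, Equiv.coe_fn_mk]
    push_cast
    linear_combination (-4 * (u.1 : ℝ)) * hsq
  have hμ : (0 : ℝ) < 3 + 2 * √2 := by positivity
  rw [eigenOrder_apply, eigenOrder_apply, Prod.Lex.toLex_le_toLex] at h ⊢
  rw [heig, heig]
  rcases h with hlt | ⟨heq, hle⟩
  · exact Or.inl (mul_lt_mul_of_pos_left hlt hμ)
  · exact Or.inr ⟨congrArg (_ * ·) heq, hle⟩

theorem eq_of_tauExponent_add_eq (k : Type*) [Field k] [CharZero k] {v w : ℤ × ℤ × ℤ}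
    (hexp : tauExponent v + w = v + tauExponent w)
    (hχ : tauChar k (.ofAdd v) = tauChar k (.ofAdd w)) : v = w := by
  have h2 : (2 : k) ^ v.2.2 = 2 ^ w.2.2 := by
    rw [← tauChar_apply, ← tauChar_apply, hχ]
  have h3 : v.2.2 = w.2.2 := by
    refine zpow_right_injective₀ (a := (2 : ℚ)) two_pos (by norm_num) ?_
    exact Rat.cast_injective (α := k) (by push_cast; exact h2)
  simp only [tauExponent, AddEquiv.coe_mk, Equiv.coe_fn_mk, Prod.ext_iff, Prod.fst_add,
    Prod.snd_add] at hexp ⊢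
  omega

theorem AlgEquiv.toAlgHom_eq_twistMap_tau {k : Type*} [Field k] [NeZero (2 : k)]
    (τ : k[ℤ × ℤ × ℤ] ≃ₐ[k] k[ℤ × ℤ × ℤ]) (hτx : τ (Xa k) = Xa k ^ 5 * Ya k ^ 4)
    (hτy : τ (Ya k) = Xa k * Ya k) (hτu : τ (Ua k) = 2 * Ua k) :
    (τ : k[ℤ × ℤ × ℤ] →ₐ[k] k[ℤ × ℤ × ℤ]) = twistMap tauExponent (tauChar k) := by
  refine AlgHom.eq_twistMap closure_ofAdd_basis_eq_top _ ?_
  simp only [Set.mem_insert_iff, Set.mem_singleton_iff, forall_eq_or_imp, forall_eq]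
  refine ⟨?_, ?_, ?_⟩
  all_goals
    simp only [AlgEquiv.coe_toAlgHom, of_apply, twistMonomial, tauExponent]
    simp [tauChar_apply]
  · simpa [Xa, Ya, single_pow, single_mul_single] using hτx
  · simpa [Xa, Ya, single_mul_single] using hτy
  · rwa [Ua, two_mul, ← single_add, one_add_one_eq_two] at hτu

/-- Let `k` be of characteristic zero, let `τ` be the `k`-algebra automorphism of
`A = k[x^{±1}, y^{±1}, u^{±1}]` with `τ(x) = x^5 y^4`, `τ(y) = x y`, `τ(u) = 2u`, and let
`τ̂` be the induced automorphism of `Frac(A)`.  Every `τ̂`-fixed element of `Frac(A)` lies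
in the image of `k`; that is, the fixed field of `τ̂` is `k`. -/
theorem stmt7 (k : Type*) [Field k] [CharZero k]
    (τ : AddMonoidAlgebra k (ℤ × ℤ × ℤ) ≃ₐ[k] AddMonoidAlgebra k (ℤ × ℤ × ℤ))
    (hτx : τ (Xa k) = Xa k ^ 5 * Ya k ^ 4)
    (hτy : τ (Ya k) = Xa k * Ya k)
    (hτu : τ (Ua k) = 2 * Ua k)
    (τhat : FractionRing (AddMonoidAlgebra k (ℤ × ℤ × ℤ)) ≃+*
      FractionRing (AddMonoidAlgebra k (ℤ × ℤ × ℤ)))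
    (hcomp : ∀ a : AddMonoidAlgebra k (ℤ × ℤ × ℤ),
      τhat (algebraMap (AddMonoidAlgebra k (ℤ × ℤ × ℤ))
          (FractionRing (AddMonoidAlgebra k (ℤ × ℤ × ℤ))) a)
        = algebraMap (AddMonoidAlgebra k (ℤ × ℤ × ℤ))
          (FractionRing (AddMonoidAlgebra k (ℤ × ℤ × ℤ))) (τ a))
    (f : FractionRing (AddMonoidAlgebra k (ℤ × ℤ × ℤ))) (hf : τhat f = f) :
    ∃ a : k, f = algebraMap (AddMonoidAlgebra k (ℤ × ℤ × ℤ))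
      (FractionRing (AddMonoidAlgebra k (ℤ × ℤ × ℤ)))
      (algebraMap k (AddMonoidAlgebra k (ℤ × ℤ × ℤ)) a) := by
  obtain ⟨p, q, hq, hrel, rfl⟩ := exists_eq_div_of_map_eq_self τ τhat hcomp hf
  rw [← AlgEquiv.coe_toAlgHom, τ.toAlgHom_eq_twistMap_tau hτx hτy hτu] at hrel
  obtain ⟨a, rfl⟩ := eq_smul_of_twistMap_mul_eq eigenOrder_injective
    (fun _ _ => eigenOrder_tauExponent_le) (fun _ _ => eq_of_tauExponent_add_eq k) hq hrel
  refine ⟨a, ?_⟩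
  rw [Algebra.smul_def, map_mul, mul_div_assoc,
    div_self ((map_ne_zero_iff _ (IsFractionRing.injective _ _)).mpr hq), mul_one]
end

section
/- Let R be a ring and let e ∈ R be a nonzero idempotent (e*e = e). Let Q ⊆ R be a subset such that: every x ∈ Q satisfies x = e*x*e; Q is an additive subgroup of R; for all x ∈ Q and r ∈ R, both (e*r*e)*x ∈ Q and x*(e*r*e) ∈ Q; e ∉ Q; and Q is prime as an ideal of the corner ring eRe, i.e. for all a, b ∈ R, if (e*a*e)*(e*r*e)*(e*b*e) ∈ Q for every r ∈ R, then e*a*e ∈ Q or e*b*e ∈ Q. Then there exists a prime two-sided ideal P of R such that e ∉ P and Q = {e*x*e : x ∈ P}. -/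
/-- Let `R` be a ring, `e` a nonzero idempotent, and `Q ⊆ R` a subset consisting of elements
of the form `e*x*e`, closed under addition, negation, containing `0`, stable under left and
right multiplication by elements `e*r*e` of the corner ring, with `e ∉ Q`, and prime as an
ideal of the corner ring `eRe`.  Then there is a prime two-sided ideal `P` of `R` such that
`e ∉ P` and `Q = ePe = {e*x*e : x ∈ P}`. -/
theorem stmt11 (R : Type*) [Ring R] (e : R) (he : e * e = e) (he0 : e ≠ 0)
    (Q : Set R)
    (hQcorner : ∀ x ∈ Q, x = e * x * e)
    (hQzero : (0 : R) ∈ Q)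
    (hQadd : ∀ x ∈ Q, ∀ y ∈ Q, x + y ∈ Q)
    (hQneg : ∀ x ∈ Q, -x ∈ Q)
    (hQmul : ∀ x ∈ Q, ∀ r : R, (e * r * e) * x ∈ Q ∧ x * (e * r * e) ∈ Q)
    (heQ : e ∉ Q)
    (hQprime : ∀ a b : R, (∀ r : R, (e * a * e) * (e * r * e) * (e * b * e) ∈ Q) →
      e * a * e ∈ Q ∨ e * b * e ∈ Q) :
    ∃ P : TwoSidedIdeal R, P ≠ ⊤ ∧
      (∀ a b : R, (∀ r : R, a * r * b ∈ P) → a ∈ P ∨ b ∈ P) ∧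
      e ∉ P ∧ Q = {y : R | ∃ x ∈ P, y = e * x * e} := by
  set S : Set R := {x : R | ∀ r s : R, e * r * x * s * e ∈ Q} with hS
  have hzero : (0 : R) ∈ S := by
    intro r s; simpa using hQzero
  have hadd : ∀ {x y : R}, x ∈ S → y ∈ S → x + y ∈ S := by
    intro x y hx hy r s
    have := hQadd _ (hx r s) _ (hy r s)
    convert this using 1; noncomm_ring
  have hneg : ∀ {x : R}, x ∈ S → -x ∈ S := by
    intro x hx r s
    have := hQneg _ (hx r s)
    convert this using 1; noncomm_ring
  have hml : ∀ {x y : R}, y ∈ S → x * y ∈ S := by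
    intro x y hy r s
    have := hy (r * x) s
    convert this using 1; noncomm_ring
  have hmr : ∀ {x y : R}, x ∈ S → x * y ∈ S := by
    intro x y hx r s
    have := hx r (y * s)
    convert this using 1; noncomm_ring
  refine ⟨TwoSidedIdeal.mk' S hzero hadd hneg hml hmr, ?_, ?_, ?_, ?_⟩
  · -- P ≠ ⊤
    intro h
    have : e ∈ S := by
      rw [← TwoSidedIdeal.mem_mk' S hzero hadd hneg hml hmr, h]
      trivial
    have := this e e
    rw [show e * e * e * e * e = e by rw [he, he, he, he]] at this
    exact heQ this
  · -- primeness
    intro a b hab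
    simp only [TwoSidedIdeal.mem_mk'] at hab ⊢
    by_cases ha : a ∈ S
    · exact Or.inl ha
    · right
      have ha' : ¬ ∀ r s : R, e * r * a * s * e ∈ Q := ha
      push_neg at ha'
      obtain ⟨r0, s0, h0⟩ := ha'
      intro r s
      have key := hQprime (r0 * a * s0) (r * b * s) ?_
      · rcases key with h | h
        · exact absurd (by rw [show e * (r0 * a * s0) * e = e * r0 * a * s0 * e by noncomm_ring] at h; exact h) h0
        · rw [show e * (r * b * s) * e = e * r * b * s * e by noncomm_ring] at h; exact h
      · intro t
        have := hab (s0 * (e * t * e) * r) r0 s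
        have hee : ∀ x : R, x * e * e = x * e := fun x => by rw [mul_assoc, he]
        convert this using 1
        simp only [← mul_assoc, hee]
  · -- e ∉ P
    intro h
    rw [TwoSidedIdeal.mem_mk'] at h
    have := h e e
    rw [show e * e * e * e * e = e by rw [he, he, he, he]] at this
    exact heQ this
  · -- Q = ePe
    ext q
    simp only [Set.mem_setOf_eq, TwoSidedIdeal.mem_mk']
    constructor
    · intro hq
      refine ⟨q, ?_, hQcorner q hq⟩
      intro r s
      have h1 := (hQmul q hq r).1
      have h2 := (hQmul _ h1 s).2
      have hcq := hQcorner q hq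
      have heq : e * r * q * s * e = e * r * e * q * (e * s * e) := by
        conv_lhs => rw [hcq]
        noncomm_ring
      rw [heq]; exact h2
    · rintro ⟨x, hx, rfl⟩
      have := hx e e
      rw [show e * e * x * e * e = e * x * e by rw [show e * e * x * e * e = (e*e) * x * (e*e) by noncomm_ring, he]] at this
      exact this
end
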